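/- arXiv:2303.14819 — 2 statements merged into one kernel-verified Lean document; each statement's English description precedes it below -/
import Mathlib

section
/- Let K be a number field with ring of integers R, and let m_p ∈ ℕ≥1 be defined for each prime p of R. For m ≥ 2 define the ideal D(m) = ∏_{p : m_p ≤ m} p (a possibly infinite product, assumed finite). If log log N(D(m)) ≤ C log m for all m ≥ 2, then ∑_{p : m_p ≤ m} (log Np)/Np ≤ C' log m + C'' for constants C', C'' depending only on K and C. -/
/-!
Every nonzero prime `P` has norm `q ^ f` for the rational prime `q` below it, and
`log (q ^ f) / q ^ f ≤ log q / q`; at most `[K : ℚ]` primes lie above a given `q`. Write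
`T = ∑_{P ∣ D(M)} log N P = log N (D(M))`. Primes with `N P > T` contribute at most
`∑ log N P / T = 1`, while primes with `N P ≤ T` lie above rational primes `q ≤ T`, so they
contribute at most `[K : ℚ] ∑_{q ≤ T} log q / q = O(log T)` by the dyadic Mertens bound
(Chebyshev's `θ(n) ≤ n log 4` applied on each range `(n/2, n]`). The hypothesis makes
`log T ≤ C log M`.
-/

open NumberField

open Finset Real

namespace Chebyshev

theorem sum_primesLE_log_div_le_sum_half_add (n : ℕ) :
    ∑ p ∈ Nat.primesLE n, log p / p ≤
      ∑ p ∈ Nat.primesLE (n / 2), log p / p + 2 * log 4 := by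
  rcases n.eq_zero_or_pos with rfl | hn
  · simp only [Nat.primesLE_zero, sum_empty, Nat.zero_div, zero_add]
    positivity
  rw [← sum_sdiff (Nat.primesLE_mono (Nat.div_le_self n 2)), add_comm]
  gcongr
  have hn' : (0 : ℝ) < n := by exact_mod_cast hn
  calc ∑ p ∈ Nat.primesLE n \ Nat.primesLE (n / 2), log p / p
      ≤ ∑ p ∈ Nat.primesLE n \ Nat.primesLE (n / 2), 2 / n * log p := by
        refine sum_le_sum fun p hp => ?_
        obtain ⟨hpn, hpn2⟩ := mem_sdiff.mp hp
        have hp1 := Nat.one_lt_of_mem_primesLE hpn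
        have h2p : (n : ℝ) ≤ 2 * p := by
          have : n ≤ 2 * p := by
            by_contra! h
            exact hpn2 (Nat.mem_primesLE.mpr ⟨by omega, Nat.prime_of_mem_primesLE hpn⟩)
          exact_mod_cast this
        have hp0 : (0 : ℝ) < p := by positivity
        rw [div_mul_eq_mul_div, div_le_div_iff₀ hp0 hn']
        have := log_natCast_nonneg p
        nlinarith
    _ ≤ ∑ p ∈ Nat.primesLE n, 2 / n * log p :=
        sum_le_sum_of_subset_of_nonneg sdiff_subset fun p _ _ => by
          have := log_natCast_nonneg p; positivity
    _ = 2 / n * θ n := by rw [theta_eq_sum_primesLE_log, mul_sum]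
    _ ≤ 2 / n * (log 4 * n) := by gcongr; exact theta_le_log4_mul_x n.cast_nonneg
    _ = 2 * log 4 := by field_simp

theorem sum_primesLE_log_div_le_natLog (n : ℕ) :
    ∑ p ∈ Nat.primesLE n, log p / p ≤ 2 * log 4 * (Nat.log 2 n + 1) := by
  induction n using Nat.strong_induction_on with
  | _ n ih =>
  rcases lt_or_ge n 2 with hn | hn
  · interval_cases n <;> simp only [Nat.primesLE_zero, Nat.primesLE_one, sum_empty] <;>
      positivity
  · have hlog : 1 ≤ Nat.log 2 n := Nat.le_log_of_pow_le one_lt_two (by simpa using hn)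
    calc ∑ p ∈ Nat.primesLE n, log p / p
        ≤ ∑ p ∈ Nat.primesLE (n / 2), log p / p + 2 * log 4 :=
          sum_primesLE_log_div_le_sum_half_add n
      _ ≤ 2 * log 4 * (Nat.log 2 (n / 2) + 1) + 2 * log 4 := by
          gcongr; exact ih _ (by omega)
      _ = 2 * log 4 * (Nat.log 2 n + 1) := by
          rw [Nat.log_div_base, Nat.cast_sub hlog]; ring

theorem sum_primesLE_log_div_le (n : ℕ) :
    ∑ p ∈ Nat.primesLE n, log p / p ≤ 4 * (log n + log 2) := by
  have hlog4 : log 4 = 2 * log 2 := by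
    rw [show (4 : ℝ) = 2 ^ 2 by norm_num, log_pow]; norm_num
  have hlog2 : 0 < log 2 := log_pos one_lt_two
  have := natLog_le_logb n 2
  rw [logb, Nat.cast_ofNat, le_div_iff₀ hlog2] at this
  calc _ ≤ 2 * log 4 * (Nat.log 2 n + 1) := sum_primesLE_log_div_le_natLog n
    _ ≤ 4 * (log n + log 2) := by rw [hlog4]; linarith

end Chebyshev

theorem Real.log_pow_div_pow_le (q f : ℕ) :
    log ((q ^ f : ℕ) : ℝ) / ((q ^ f : ℕ) : ℝ) ≤ log q / q := by
  rcases eq_or_ne q 1 with rfl | hq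
  · simp
  rcases q.eq_zero_or_pos with rfl | hq0
  · rcases f.eq_zero_or_pos with rfl | hf
    · simp
    · simp [hf.ne']
  have hqf : ((q * f : ℕ) : ℝ) ≤ ((q ^ f : ℕ) : ℝ) := mod_cast Nat.mul_le_pow hq f
  push_cast at hqf ⊢
  rw [log_pow, div_le_div_iff₀ (by positivity) (by positivity)]
  have := log_natCast_nonneg q
  nlinarith

theorem Finset.sum_comp_le_mul_sum_image {ι κ : Type*} [DecidableEq κ] (s : Finset ι)
    (g : ι → κ) (f : κ → ℝ) (hf : ∀ y ∈ s.image g, 0 ≤ f y) (d : ℕ)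
    (hd : ∀ y ∈ s.image g, #{x ∈ s | g x = y} ≤ d) :
    ∑ x ∈ s, f (g x) ≤ d * ∑ y ∈ s.image g, f y := by
  rw [sum_comp, mul_sum]
  refine sum_le_sum fun y hy => ?_
  rw [nsmul_eq_mul]
  gcongr
  · exact hf y hy
  · exact_mod_cast hd y hy

theorem Finset.sum_filter_lt_div_le_one {ι : Type*} (s : Finset ι) (a b : ι → ℝ)
    (ha : ∀ i ∈ s, 0 ≤ a i) :
    ∑ i ∈ s with ∑ j ∈ s, a j < b i, a i / b i ≤ 1 := by
  set T := ∑ j ∈ s, a j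
  rcases (sum_nonneg ha).eq_or_lt with hT | hT
  · have : ∀ i ∈ s, a i = 0 := (sum_eq_zero_iff_of_nonneg ha).mp hT.symm
    rw [sum_eq_zero fun i hi => by rw [this i (mem_filter.mp hi).1, zero_div]]
    exact zero_le_one
  calc ∑ i ∈ s with T < b i, a i / b i
      ≤ ∑ i ∈ s with T < b i, a i / T := by
        refine sum_le_sum fun i hi => ?_
        obtain ⟨his, hi⟩ := mem_filter.mp hi
        exact div_le_div_of_nonneg_left (ha i his) hT hi.le
    _ ≤ ∑ i ∈ s, a i / T :=
        sum_le_sum_of_subset_of_nonneg (filter_subset _ _) fun i hi _ =>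
          div_nonneg (ha i hi) hT.le
    _ = 1 := by rw [← sum_div, div_self hT.ne']

namespace Ideal

variable {S : Type*} [CommRing S] [IsDedekindDomain S] [Module.Free ℤ S] [Module.Finite ℤ S]

theorem exists_absNorm_eq_minFac_pow {P : Ideal S} (hP : P.IsMaximal) :
    ∃ f, 0 < f ∧ (absNorm P).minFac.Prime ∧ ((absNorm P).minFac : S) ∈ P ∧
      absNorm P = (absNorm P).minFac ^ f := by
  obtain ⟨p, f, hf, hpP, hp, hN⟩ := exists_prime_and_absNorm_eq_pow P
  rw [hN, hp.pow_minFac hf.ne']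
  exact ⟨f, hf, hp, hpP, rfl⟩

theorem le_absNorm_of_natCast_mem {P : Ideal S} (hP : P ≠ ⊤) {q : ℕ} (hq : q.Prime)
    (hqP : (q : S) ∈ P) : q ≤ absNorm P := by
  have hdvd : absNorm P ∣ q ^ Module.finrank ℤ S := by
    rw [← absNorm_span_natCast]
    exact absNorm_dvd_absNorm_of_le ((span_singleton_le_iff_mem _).mpr hqP)
  obtain ⟨k, -, hk⟩ := (Nat.dvd_prime_pow hq).mp hdvd
  have hk0 : k ≠ 0 := by
    rintro rfl
    exact hP (absNorm_eq_one_iff.mp hk)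
  rw [hk]
  exact Nat.le_self_pow hk0 q

theorem card_le_finrank_of_natCast_mem {q : ℕ} (hq : q.Prime) (s : Finset (Ideal S))
    (hs : ∀ P ∈ s, P.IsMaximal ∧ (q : S) ∈ P) : #s ≤ Module.finrank ℤ S := by
  have hprod : ∏ P ∈ s, P ∣ span {(q : S)} := by
    refine prod_dvd_of_coprime (fun P hP Q hQ hne => ?_) fun P hP => ?_
    · exact isCoprime_iff_sup_eq.mpr ((hs P hP).1.coprime_of_ne (hs Q hQ).1 hne)
    · exact dvd_iff_le.mpr ((span_singleton_le_iff_mem _).mpr (hs P hP).2)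
  have hnorm : ∏ P ∈ s, absNorm P ∣ q ^ Module.finrank ℤ S := by
    rw [← absNorm_span_natCast, ← map_prod]
    exact absNorm_dvd_absNorm_of_le (dvd_iff_le.mp hprod)
  have hpow : q ^ #s ≤ ∏ P ∈ s, absNorm P := by
    rw [← prod_const]
    exact prod_le_prod' fun P hP => le_absNorm_of_natCast_mem (hs P hP).1.ne_top hq (hs P hP).2
  exact (Nat.pow_le_pow_iff_right hq.one_lt).mp
    (hpow.trans (Nat.le_of_dvd (pow_pos hq.pos _) hnorm))

theorem sum_log_absNorm_div_le_of_absNorm_le (s : Finset (Ideal S)) (x : ℕ)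
    (hs : ∀ P ∈ s, P.IsMaximal ∧ absNorm P ≤ x) :
    ∑ P ∈ s, log (absNorm P) / absNorm P ≤
      Module.finrank ℤ S * ∑ q ∈ Nat.primesLE x, log q / q := by
  have himage : s.image (fun P => (absNorm P).minFac) ⊆ Nat.primesLE x := by
    simp only [subset_iff, mem_image, forall_exists_index, and_imp, forall_apply_eq_imp_iff₂]
    intro P hP
    obtain ⟨f, hf, hq, -, hN⟩ := exists_absNorm_eq_minFac_pow (hs P hP).1
    refine Nat.mem_primesLE.mpr ⟨?_, hq⟩
    calc (absNorm P).minFac ≤ (absNorm P).minFac ^ f := Nat.le_self_pow hf.ne' _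
      _ = absNorm P := hN.symm
      _ ≤ x := (hs P hP).2
  calc ∑ P ∈ s, log (absNorm P) / absNorm P
      ≤ ∑ P ∈ s, log (absNorm P).minFac / (absNorm P).minFac := by
        refine sum_le_sum fun P hP => ?_
        obtain ⟨f, -, -, -, hN⟩ := exists_absNorm_eq_minFac_pow (hs P hP).1
        have := log_pow_div_pow_le (absNorm P).minFac f
        rwa [← hN] at this
    _ ≤ Module.finrank ℤ S * ∑ q ∈ s.image (fun P => (absNorm P).minFac), log q / q := by
        refine sum_comp_le_mul_sum_image s _ (fun q : ℕ => log q / q)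
          (fun q _ => div_nonneg (log_natCast_nonneg q) q.cast_nonneg) _ fun q hq => ?_
        refine card_le_finrank_of_natCast_mem (Nat.prime_of_mem_primesLE (himage hq)) _
          fun P hP => ?_
        obtain ⟨hPs, rfl⟩ := mem_filter.mp hP
        obtain ⟨-, -, -, hmem, -⟩ := exists_absNorm_eq_minFac_pow (hs P hPs).1
        exact ⟨(hs P hPs).1, hmem⟩
    _ ≤ Module.finrank ℤ S * ∑ q ∈ Nat.primesLE x, log q / q := by gcongr

theorem sum_log_absNorm_div_le (s : Finset (Ideal S)) (hs : ∀ P ∈ s, P.IsMaximal) :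
    ∑ P ∈ s, log (absNorm P) / absNorm P ≤
      Module.finrank ℤ S * ∑ q ∈ Nat.primesLE ⌊∑ P ∈ s, log (absNorm P)⌋₊, log q / q
        + 1 := by
  classical
  set T := ∑ P ∈ s, log (absNorm P)
  rw [← sum_filter_not_add_sum_filter s (fun P => T < absNorm P)]
  gcongr
  · refine sum_log_absNorm_div_le_of_absNorm_le _ _ fun P hP => ?_
    obtain ⟨hPs, hPT⟩ := mem_filter.mp hP
    exact ⟨hs P hPs, Nat.le_floor (not_lt.mp hPT)⟩
  · exact sum_filter_lt_div_le_one s _ _ fun P _ => log_natCast_nonneg _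

theorem log_absNorm_prod (s : Finset (Ideal S)) (hs : ∀ P ∈ s, P ≠ ⊥) :
    log (absNorm (∏ P ∈ s, P)) = ∑ P ∈ s, log (absNorm P) := by
  rw [map_prod, Nat.cast_prod, log_prod]
  exact fun P hP => Nat.cast_ne_zero.mpr (absNorm_ne_zero_iff_mem_nonZeroDivisors.mpr
    (mem_nonZeroDivisors_of_ne_zero (hs P hP)))

end Ideal

theorem stmt_11 (K : Type*) [Field K] [NumberField K]
    (m : Ideal (𝓞 K) → ℕ)
    (hfin : ∀ M : ℕ,
      {p : Ideal (𝓞 K) | p.IsPrime ∧ p ≠ ⊥ ∧ m p ≤ M}.Finite)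
    (C : ℝ)
    (hD : ∀ M : ℕ, 2 ≤ M →
      Real.log (Real.log (Ideal.absNorm (∏ p ∈ (hfin M).toFinset, p)))
        ≤ C * Real.log M) :
    ∃ C' C'' : ℝ, ∀ M : ℕ, 2 ≤ M →
      ∑ p ∈ (hfin M).toFinset,
          Real.log (Ideal.absNorm p) / (Ideal.absNorm p : ℝ)
        ≤ C' * Real.log M + C'' := by
  set d : ℝ := (Module.finrank ℤ (𝓞 K) : ℝ)
  refine ⟨4 * d * max C 0, 4 * d * log 2 + 1, fun M hM => ?_⟩
  set s := (hfin M).toFinset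
  have hs : ∀ P ∈ s, P.IsMaximal ∧ P ≠ ⊥ := fun P hP => by
    obtain ⟨hprime, hbot, -⟩ := (hfin M).mem_toFinset.mp hP
    exact ⟨hprime.isMaximal hbot, hbot⟩
  set T := ∑ P ∈ s, log (Ideal.absNorm P)
  have hlogT : log ⌊T⌋₊ ≤ max C 0 * log M := by
    rcases (⌊T⌋₊).eq_zero_or_pos with h | h
    · rw [h, Nat.cast_zero, log_zero]
      exact mul_nonneg (le_max_right _ _) (log_natCast_nonneg M)
    calc log ⌊T⌋₊ ≤ log T :=
          log_le_log (mod_cast h) (Nat.floor_le (sum_nonneg fun P _ => log_natCast_nonneg _))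
      _ = log (log (Ideal.absNorm (∏ P ∈ s, P))) := by
          rw [Ideal.log_absNorm_prod s fun P hP => (hs P hP).2]
      _ ≤ C * log M := hD M hM
      _ ≤ max C 0 * log M := by gcongr; exact le_max_left C 0
  calc ∑ P ∈ s, log (Ideal.absNorm P) / (Ideal.absNorm P : ℝ)
      ≤ d * ∑ q ∈ Nat.primesLE ⌊T⌋₊, log q / q + 1 :=
        Ideal.sum_log_absNorm_div_le s fun P hP => (hs P hP).1
    _ ≤ d * (4 * (log ⌊T⌋₊ + log 2)) + 1 := by
        gcongr; exact Chebyshev.sum_primesLE_log_div_le _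
    _ ≤ d * (4 * (max C 0 * log M + log 2)) + 1 := by gcongr
    _ = 4 * d * max C 0 * log M + (4 * d * log 2 + 1) := by ring
end

section
/- Let Σ ⊂ X × X be a finite set, h : X → ℝ a function, and f₁, f₂ : X → X maps such that for all P, Q ∈ X: (i) P ≠ Q and f₁(P) = f₁(Q) implies (P,Q) ∈ Σ; (ii) P ≠ Q and f₂(P) = f₂(Q) implies (P,Q) ∈ Σ; (iii) f₁(P) = f₂(Q) implies (P,Q) ∈ Σ. Let C bound the h-values of all coordinates of points of Σ, and suppose h(g(x)) ≥ h(x) for all g in the semigroup M generated by {f₁, f₂} whenever h(x) > C, and that no x with h(x) > C satisfies F(x) = x for a nontrivial F ∈ M. Then every x with h(x) > C is strongly wandering: the map M → X, F ↦ F(x), is injective (M being the free semigroup on two letters acting via f₁, f₂). -/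
/-!
Peel off the first letters: if `a w • x = b v • x` with letters `a, b`, then `w • x` and `v • x`
have height above `C` (heights do not decrease along orbits), so the pair `(w • x, v • x)` is not
in `Sig`, and hypotheses (i)–(iii) force `a = b` and `w • x = v • x`. Induction on the word length
reduces everything to `w • x = x`, which is excluded for nonempty `w`.
-/

section FreeMonoidOrbit

variable {α X : Type*} (act : FreeMonoid α →* Function.End X)

theorem act_of_mul_apply (i : α) (w : FreeMonoid α) (x : X) :
    act (FreeMonoid.of i * w) x = act (FreeMonoid.of i) (act w x) := by
  rw [map_mul]; rfl

theorem injective_act_apply_of_no_collision {S : Set X}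
    (hS : ∀ x ∈ S, ∀ w, act w x ∈ S)
    (hcoll : ∀ i j, ∀ P ∈ S, ∀ Q ∈ S,
      act (FreeMonoid.of i) P = act (FreeMonoid.of j) Q → i = j ∧ P = Q)
    (hfix : ∀ x ∈ S, ∀ w ≠ 1, act w x ≠ x) {x : X} (hx : x ∈ S) :
    Function.Injective (fun w : FreeMonoid α => act w x) := by
  have one_apply : act 1 x = x := by rw [map_one]; rfl
  have eq_one_of_apply_eq (v : FreeMonoid α) (hv : act v x = x) : v = 1 := by
    by_contra hne
    exact hfix x hx v hne hv
  intro w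
  induction w using FreeMonoid.inductionOn' with
  | one => exact fun v hv => (eq_one_of_apply_eq v (hv.symm.trans one_apply)).symm
  | of_mul i w ih =>
    intro v hv
    cases v using FreeMonoid.casesOn with
    | one =>
      exact absurd (LeftCancelMonoid.eq_one_of_mul_right (eq_one_of_apply_eq _ (hv.trans one_apply)))
        (FreeMonoid.of_ne_one i)
    | of_mul j v =>
      simp only [act_of_mul_apply] at hv
      obtain ⟨rfl, hwv⟩ := hcoll i j _ (hS x hx w) _ (hS x hx v) hv
      rw [ih hwv]

end FreeMonoidOrbit

theorem fin_two_eq_and_eq_of_apply_eq {X : Type*} {f : Fin 2 → X → X} {Sig : Set (X × X)}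
    (hi : ∀ P Q : X, P ≠ Q → f 0 P = f 0 Q → (P, Q) ∈ Sig)
    (hii : ∀ P Q : X, P ≠ Q → f 1 P = f 1 Q → (P, Q) ∈ Sig)
    (hiii : ∀ P Q : X, f 0 P = f 1 Q → (P, Q) ∈ Sig)
    {P Q : X} (hPQ : (P, Q) ∉ Sig) (hQP : (Q, P) ∉ Sig) {i j : Fin 2} (he : f i P = f j Q) :
    i = j ∧ P = Q := by
  fin_cases i <;> fin_cases j
  · exact ⟨rfl, by_contra fun hne => hPQ (hi P Q hne he)⟩
  · exact absurd (hiii P Q he) hPQ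
  · exact absurd (hiii Q P he.symm) hQP
  · exact ⟨rfl, by_contra fun hne => hPQ (hii P Q hne he)⟩

theorem stmt_16_general (X : Type*) (h : X → ℝ) (f : Fin 2 → X → X)
    (Sig : Set (X × X))
    (hi : ∀ P Q : X, P ≠ Q → f 0 P = f 0 Q → (P, Q) ∈ Sig)
    (hii : ∀ P Q : X, P ≠ Q → f 1 P = f 1 Q → (P, Q) ∈ Sig)
    (hiii : ∀ P Q : X, f 0 P = f 1 Q → (P, Q) ∈ Sig)
    (C : ℝ)
    (hC : ∀ z ∈ Sig, h z.1 ≤ C ∧ h z.2 ≤ C)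
    (act : FreeMonoid (Fin 2) →* Function.End X)
    (hact : ∀ i : Fin 2, act (FreeMonoid.of i) = f i)
    (hmono : ∀ x : X, C < h x → ∀ w : FreeMonoid (Fin 2), h x ≤ h (act w x))
    (hnofix : ∀ x : X, C < h x → ∀ w : FreeMonoid (Fin 2), w ≠ 1 → act w x ≠ x) :
    ∀ x : X, C < h x →
      Function.Injective (fun w : FreeMonoid (Fin 2) => act w x) := by
  intro x hx
  refine injective_act_apply_of_no_collision act (S := {y | C < h y})
    (fun y hy w => hy.trans_le (hmono y hy w)) ?_ hnofix hx
  intro i j P hP Q _ he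
  rw [hact, hact] at he
  exact fin_two_eq_and_eq_of_apply_eq hi hii hiii (fun hm => (hC _ hm).1.not_gt hP)
    (fun hm => (hC _ hm).2.not_gt hP) he

theorem stmt_16 (X : Type*) (h : X → ℝ) (f : Fin 2 → X → X)
    (Sig : Set (X × X)) (hSigfin : Sig.Finite)
    (hi : ∀ P Q : X, P ≠ Q → f 0 P = f 0 Q → (P, Q) ∈ Sig)
    (hii : ∀ P Q : X, P ≠ Q → f 1 P = f 1 Q → (P, Q) ∈ Sig)
    (hiii : ∀ P Q : X, f 0 P = f 1 Q → (P, Q) ∈ Sig)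
    (C : ℝ)
    (hC : ∀ z ∈ Sig, h z.1 ≤ C ∧ h z.2 ≤ C)
    (act : FreeMonoid (Fin 2) →* Function.End X)
    (hact : ∀ i : Fin 2, act (FreeMonoid.of i) = f i)
    (hmono : ∀ x : X, C < h x → ∀ w : FreeMonoid (Fin 2), h x ≤ h (act w x))
    (hnofix : ∀ x : X, C < h x → ∀ w : FreeMonoid (Fin 2), w ≠ 1 → act w x ≠ x) :
    ∀ x : X, C < h x →
      Function.Injective (fun w : FreeMonoid (Fin 2) => act w x) :=
  stmt_16_general X h f Sig hi hii hiii C hC act hact hmono hnofix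
end
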